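/- arXiv:2010.06669 — 2 statements merged into one kernel-verified Lean document; each statement's English description precedes it below -/
import Mathlib

section
/- Let R be a commutative ring and let a = (a_1,...,a_n) and b = (b_1,...,b_n) be row vectors over R with n ≥ 2. Define the Suslin matrix α_n(a,b) of size 2^{n-1} inductively by α_1(a,b) = (a_1) and α_n(a,b) = [[a_1·Id, α_{n-1}(a',b')],[−α_{n-1}(b',a')^t, b_1·Id]] where a' = (a_2,...,a_n), b' = (b_2,...,b_n). Then det(α_n(a,b)) = (a·b^t)^{2^{n-2}} for all n ≥ 2. -/
open Matrix

variable {R : Type*} [CommRing R]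

/-- A matrix is alternating if its transpose is its negative and its diagonal vanishes. -/
def IsAltMat {n : Type*} [Fintype n] [DecidableEq n] (M : Matrix n n R) : Prop :=
  Mᵀ = -M ∧ ∀ i, M i i = 0

/-- Block-diagonal (orthogonal) sum of two square matrices. -/
def bd {m n : ℕ} (A : Matrix (Fin m) (Fin m) R) (B : Matrix (Fin n) (Fin n) R) :
    Matrix (Fin (m + n)) (Fin (m + n)) R :=
  Matrix.reindex finSumFinEquiv finSumFinEquiv (Matrix.fromBlocks A 0 0 B)

/-- The standard symplectic matrix ψ₂ ⊥ ... ⊥ ψ₂. -/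
def psiMat (k : ℕ) : Matrix (Fin k) (Fin k) R :=
  Matrix.of fun i j =>
    if (i : ℕ) + 1 = (j : ℕ) ∧ Even (i : ℕ) then 1
    else if (j : ℕ) + 1 = (i : ℕ) ∧ Even (j : ℕ) then -1 else 0

/-- The matrix σ₂ ⊥ ... ⊥ σ₂ with σ₂ = [[0,1],[1,0]]. -/
def sigmaMat (k : ℕ) : Matrix (Fin k) (Fin k) R :=
  Matrix.of fun i j =>
    if ((i : ℕ) + 1 = (j : ℕ) ∧ Even (i : ℕ)) ∨ ((j : ℕ) + 1 = (i : ℕ) ∧ Even (j : ℕ)) then 1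
    else 0

/-- The elementary subgroup `E_N(R)`, realized as the submonoid of the matrix ring
generated by elementary (transvection) matrices. -/
def Esub (N : ℕ) : Submonoid (Matrix (Fin N) (Fin N) R) :=
  Submonoid.closure {M | ∃ (i j : Fin N) (c : R), i ≠ j ∧ M = Matrix.transvection i j c}

/-- The Pfaffian of a square matrix, by expansion along the first row
(it is the usual Pfaffian on alternating matrices of even size). -/
def pfaffian : (n : ℕ) → Matrix (Fin n) (Fin n) R → R
  | 0, _ => 1
  | 1, _ => 0
  | (n + 2), A =>
      ∑ j : Fin (n + 1),
        (-1) ^ (j : ℕ) * A 0 j.succ *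
          pfaffian n (A.submatrix (fun i => (j.succAbove i).succ)
            (fun i => (j.succAbove i).succ))

/-- Suslin matrices: `suslin n a b` is the Suslin matrix `α_{n+1}(a,b)` of size `2^n`. -/
def suslin : (n : ℕ) → (Fin (n + 1) → R) → (Fin (n + 1) → R) →
    Matrix (Fin (2 ^ n)) (Fin (2 ^ n)) R
  | 0, a, _ => Matrix.of fun _ _ => a 0
  | (n + 1), a, b =>
      Matrix.reindex (finSumFinEquiv.trans (finCongr (by ring)))
        (finSumFinEquiv.trans (finCongr (by ring)))
        (Matrix.fromBlocks (a 0 • (1 : Matrix (Fin (2 ^ n)) (Fin (2 ^ n)) R))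
          (suslin n (fun i => a i.succ) (fun i => b i.succ))
          (-(suslin n (fun i => b i.succ) (fun i => a i.succ))ᵀ)
          (b 0 • (1 : Matrix (Fin (2 ^ n)) (Fin (2 ^ n)) R)))

/-- Stabilized invertible alternating matrices: pairs of a rank and a matrix of that even rank. -/
abbrev Sig (R : Type*) [CommRing R] := Σ n : ℕ, Matrix (Fin (2 * n)) (Fin (2 * n)) R

/-- The equivalence relation defining `W'_E(R)`: `M ~ N` iff
`M ⊥ ψ_{2n+2s} = Eᵗ (N ⊥ ψ_{2m+2s}) E` for some `s ≥ 1` and elementary `E`. -/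
def altRel (x y : Sig R) : Prop :=
  ∃ s : ℕ, 1 ≤ s ∧ ∃ ε ∈ Esub (R := R) (2 * x.1 + 2 * y.1 + 2 * s),
    Matrix.reindex (finCongr (by omega)) (finCongr (by omega))
        (bd x.2 (psiMat (2 * y.1 + 2 * s))) =
      εᵀ * Matrix.reindex (finCongr (by omega)) (finCongr (by omega))
        (bd y.2 (psiMat (2 * x.1 + 2 * s))) * ε

/-- Orthogonal sum on stabilized matrices. -/
def oplus (x y : Sig R) : Sig R :=
  ⟨x.1 + y.1, Matrix.reindex (finCongr (by ring)) (finCongr (by ring)) (bd x.2 y.2)⟩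

/-!
Write `α_{n+1}(a, b) = [[a₀ I, S], [-Tᵀ, b₀ I]]` with `S = α_n(a', b')` and `T = α_n(b', a')`.
By induction, `α(a, b) α(b, a)ᵀ = α(b, a)ᵀ α(a, b) = (a·bᵗ) I`: in the block product of the
inductive step the off-diagonal blocks cancel and the diagonal ones are `a₀b₀ I + S Tᵀ` and
`a₀b₀ I + Tᵀ S`. Since the lower-right block `b₀ I` is scalar, `det α_{n+1}(a, b)` is
`det (b₀ a₀ I + S Tᵀ) = det ((a·bᵗ) I) = (a·bᵗ)^{2^n}`, even when `b₀` is not invertible.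
-/

section Blocks

variable {m n : Type*} [Fintype m] [Fintype n] [DecidableEq m] [DecidableEq n]

theorem det_fromBlocks_smul_one₂₂_mul_pow (A : Matrix m m R) (B : Matrix m n R)
    (C : Matrix n m R) (c : R) :
    (fromBlocks A B C (c • 1)).det * c ^ Fintype.card m =
      (c • A - B * C).det * c ^ Fintype.card n := by
  have hprod : fromBlocks A B C (c • 1) * fromBlocks (c • 1) 0 (-C) 1 =
      fromBlocks (c • A - B * C) B 0 (c • 1) := by
    simp [fromBlocks_multiply, sub_eq_add_neg]
  have hdet := congrArg det hprod
  rwa [det_mul, det_fromBlocks_zero₁₂, det_fromBlocks_zero₂₁, det_one, mul_one, det_smul,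
    det_one, mul_one, det_smul, det_one, mul_one] at hdet

theorem det_fromBlocks_smul_one₂₂ (A B C : Matrix m m R) (c : R) :
    (fromBlocks A B C (c • 1)).det = (c • A - B * C).det := by
  -- Over `R[X]` the scalar `X` is a nonzerodivisor, so it cancels; then evaluate at `c`.
  let ι := Polynomial.C (R := R)
  have hX : (fromBlocks (A.map ι) (B.map ι) (C.map ι) (Polynomial.X • 1)).det =
      (Polynomial.X • A.map ι - B.map ι * C.map ι).det :=
    (Polynomial.monic_X.pow _).isRegular.right (det_fromBlocks_smul_one₂₂_mul_pow _ _ _ _)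
  have := congrArg (Polynomial.evalRingHom c) hX
  rw [RingHom.map_det, RingHom.map_det] at this
  convert this using 2
  · ext i j
    rcases i with i | i <;> rcases j with j | j <;>
      simp [ι, one_apply, apply_ite (Polynomial.eval c)]
  · ext i j
    simp [ι, mul_apply, Polynomial.eval_finsetSum, mul_comm c]

theorem fromBlocks_smul_one_mul_fromBlocks_smul_one (x y s : R) (S T : Matrix m m R)
    (hST : S * T = s • 1) (hTS : T * S = s • 1) :
    fromBlocks (x • 1) S (-T) (y • 1) * fromBlocks (y • 1) (-S) T (x • 1) = (x * y + s) • 1 ∧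
      fromBlocks (y • 1) (-S) T (x • 1) * fromBlocks (x • 1) S (-T) (y • 1) =
        (x * y + s) • 1 := by
  simp only [fromBlocks_multiply, mul_neg, neg_mul, hST, hTS, ← fromBlocks_one,
    fromBlocks_smul, smul_zero, Matrix.smul_mul, Matrix.mul_smul, one_mul, mul_one, smul_smul,
    fromBlocks_inj]
  refine ⟨⟨?_, ?_, ?_, ?_⟩, ?_, ?_, ?_, ?_⟩ <;> module

end Blocks

theorem suslin_mul_transpose_swap_and_transpose_swap_mul (n : ℕ) (a b : Fin (n + 1) → R) :
    suslin n a b * (suslin n b a)ᵀ = (∑ i, a i * b i) • 1 ∧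
      (suslin n b a)ᵀ * suslin n a b = (∑ i, a i * b i) • 1 := by
  induction n with
  | zero =>
    constructor <;> ext i j <;> fin_cases i <;> fin_cases j <;> simp [suslin, mul_apply, mul_comm]
  | succ n ih =>
    obtain ⟨hST, hTS⟩ := ih (fun i => a i.succ) (fun i => b i.succ)
    rw [Fin.sum_univ_succ]
    simp only [suslin, reindex_apply, transpose_submatrix, fromBlocks_transpose, transpose_neg,
      transpose_transpose, transpose_smul, transpose_one, submatrix_mul_equiv,
      fromBlocks_smul_one_mul_fromBlocks_smul_one _ _ _ _ _ hST hTS, submatrix_smul,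
      Pi.smul_apply, submatrix_one_equiv, and_self]

/-- Suslin's determinant formula: `det (α_n(a,b)) = (a·bᵗ)^{2^{n-2}}` for `n ≥ 2`.
Here `suslin m a b = α_{m+1}(a,b)` and `m ≥ 1`, so the exponent is `2^{m-1}`. -/
theorem suslin_det {R : Type*} [CommRing R] (m : ℕ) (hm : 1 ≤ m)
    (a b : Fin (m + 1) → R) :
    (suslin m a b).det = (∑ i, a i * b i) ^ 2 ^ (m - 1) := by
  obtain ⟨n, rfl⟩ : ∃ n, m = n + 1 := ⟨m - 1, by omega⟩
  have hST := (suslin_mul_transpose_swap_and_transpose_swap_mul n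
    (fun i => a i.succ) (fun i => b i.succ)).1
  calc (suslin (n + 1) a b).det
      = (b 0 • a 0 • 1 - suslin n (fun i => a i.succ) (fun i => b i.succ) *
          -(suslin n (fun i => b i.succ) (fun i => a i.succ))ᵀ).det := by
        rw [suslin, det_reindex_self, det_fromBlocks_smul_one₂₂]
    _ = ((∑ i, a i * b i) • (1 : Matrix (Fin (2 ^ n)) (Fin (2 ^ n)) R)).det := by
        rw [mul_neg, sub_neg_eq_add, hST, smul_smul, ← add_smul,
          Fin.sum_univ_succ (fun i => a i * b i), mul_comm]
    _ = (∑ i, a i * b i) ^ 2 ^ (n + 1 - 1) := by simp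
end

section
/- Let R be a commutative ring and let r, s be positive integers with rs even. Then the block permutation matrix [[0, Id_s],[Id_r, 0]] of rank r+s lies in the subgroup E_{r+s}(R) of GL_{r+s}(R) generated by elementary matrices. -/
/-!
The block matrix is the permutation matrix of the rotation `finRotate (r + s) ^ r` by `r`, whose
sign is `(-1) ^ (r * s)`; so it suffices that permutation matrices of even permutations are
elementary. The alternating group is generated by 3-cycles `swap x y * swap y z`, and the signed
swap `e_xy(1) e_yx(-1) e_xy(1)` is the swap matrix of `x, y` with one row or column negated;
choosing the negated line at the common point `y` of the two swaps makes the signs cancel.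
-/

open Matrix

variable {R : Type*} [CommRing R]

open Equiv

section SignedSwap

variable {n : Type*} [DecidableEq n]

lemma permMatrix_apply {α : Type*} [Zero α] [One α] (σ : Perm n) (a b : n) :
    σ.permMatrix α a b = if σ a = b then 1 else 0 := by
  simp [PEquiv.toMatrix_apply]

variable [Fintype n]

variable (R) in
def signedSwap (i j : n) : Matrix n n R :=
  transvection i j (1 : R) * transvection j i (-1 : R) * transvection i j (1 : R)

lemma signedSwap_apply {i j : n} (hij : i ≠ j) (a b : n) :
    signedSwap R i j a b =
      if a = i then (if b = j then 1 else 0)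
      else if a = j then (if b = i then -1 else 0)
      else (if a = b then 1 else 0) := by
  rw [signedSwap, mul_assoc]
  by_cases hai : a = i
  · subst hai
    rw [transvection_mul_apply_same, transvection_mul_apply_of_ne _ _ _ _ hij,
      transvection_mul_apply_same]
    simp only [transvection, Matrix.add_apply, one_apply, single_apply]
    grind
  by_cases haj : a = j
  · subst haj
    rw [transvection_mul_apply_of_ne _ _ _ _ hai, transvection_mul_apply_same]
    simp only [transvection, Matrix.add_apply, one_apply, single_apply]
    grind
  · rw [transvection_mul_apply_of_ne _ _ _ _ hai, transvection_mul_apply_of_ne _ _ _ _ haj]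
    simp only [transvection, Matrix.add_apply, one_apply, single_apply]
    grind

lemma signedSwap_eq_swap_mul_diagonal {i j : n} (hij : i ≠ j) :
    signedSwap R i j = swap R i j * diagonal (Pi.mulSingle i (-1)) := by
  ext a b
  rw [signedSwap_apply hij, mul_diagonal, Matrix.swap, permMatrix_apply, Pi.mulSingle_apply,
    swap_apply_def]
  grind

lemma signedSwap_eq_diagonal_mul_swap {i j : n} (hij : i ≠ j) :
    signedSwap R i j = diagonal (Pi.mulSingle j (-1)) * swap R i j := by
  ext a b
  rw [signedSwap_apply hij, diagonal_mul, Matrix.swap, permMatrix_apply, Pi.mulSingle_apply,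
    swap_apply_def]
  grind

end SignedSwap

lemma transvection_mem_Esub {N : ℕ} {i j : Fin N} (hij : i ≠ j) (c : R) :
    transvection i j c ∈ Esub (R := R) N :=
  Submonoid.subset_closure ⟨i, j, c, hij, rfl⟩

lemma signedSwap_mem_Esub {N : ℕ} {i j : Fin N} (hij : i ≠ j) :
    signedSwap R i j ∈ Esub (R := R) N :=
  mul_mem (mul_mem (transvection_mem_Esub hij _) (transvection_mem_Esub hij.symm _))
    (transvection_mem_Esub hij _)

lemma swap_mul_swap_mem_Esub {N : ℕ} {x y z : Fin N} (hxy : x ≠ y) (hyz : y ≠ z) :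
    swap R y z * swap R x y ∈ Esub (R := R) N := by
  have hsq : diagonal (Pi.mulSingle y (-1 : R)) * diagonal (Pi.mulSingle y (-1)) = 1 := by
    rw [diagonal_mul_diagonal', ← Pi.mul_def, ← Pi.mulSingle_mul, neg_mul_neg, one_mul,
      Pi.mulSingle_one]
    exact diagonal_one
  -- both sign corrections sit at `y`, so they cancel
  have h : swap R y z * swap R x y = signedSwap R y z * signedSwap R x y := by
    rw [signedSwap_eq_swap_mul_diagonal hyz, signedSwap_eq_diagonal_mul_swap hxy, mul_assoc,
      ← mul_assoc (diagonal _), hsq, one_mul]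
  rw [h]
  exact mul_mem (signedSwap_mem_Esub hyz) (signedSwap_mem_Esub hxy)

lemma permMatrix_mem_Esub_of_isThreeCycle {N : ℕ} {c : Perm (Fin N)} (hc : c.IsThreeCycle) :
    c.permMatrix R ∈ Esub (R := R) N := by
  obtain ⟨a, ha⟩ : c.support.Nonempty := Finset.card_pos.mp (by rw [hc.card_support]; norm_num)
  rw [hc.eq_swap_mul_swap_iff_mem_support.mpr ha, permMatrix_mul]
  exact swap_mul_swap_mem_Esub (Perm.mem_support.mp ha).symm
    (Perm.mem_support.mp (Perm.apply_mem_support.mpr ha)).symm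

lemma permMatrix_mem_Esub_of_mem_alternatingGroup {N : ℕ} {σ : Perm (Fin N)}
    (hσ : σ ∈ alternatingGroup (Fin N)) : σ.permMatrix R ∈ Esub (R := R) N := by
  have hle : (alternatingGroup (Fin N)).toSubmonoid ≤ (Esub (R := R) N).comap permMatrixHom := by
    rw [← Perm.closure_three_cycles_eq_alternating, Subgroup.closure_toSubmonoid_of_finite,
      Submonoid.closure_le]
    intro c hc
    exact permMatrix_mem_Esub_of_isThreeCycle (Perm.IsThreeCycle.inv hc)
  simpa using hle (inv_mem hσ : σ⁻¹ ∈ alternatingGroup (Fin N))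

lemma val_finRotate_pow_apply {N : ℕ} (k : ℕ) (a : Fin N) :
    ((finRotate N ^ k) a : ℕ) = (a + k) % N := by
  have := a.neZero
  induction k with
  | zero => simp [Nat.mod_eq_of_lt a.isLt]
  | succ k ih =>
    rw [pow_succ', Perm.mul_apply, finRotate_apply, Fin.val_add, ih, Fin.val_one', Nat.add_mod_mod,
      Nat.mod_add_mod, add_assoc]

lemma sign_finRotate_pow {r s : ℕ} (h : Even (r * s)) : Perm.sign (finRotate (r + s) ^ r) = 1 := by
  -- the exponent `(r + s - 1) * r` has the parity of `r * s`
  rw [map_pow, sign_finRotate, ← pow_mul]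
  apply Even.neg_one_pow
  rcases Nat.even_or_odd r with hr | hr
  · exact hr.mul_left _
  · have hs : Even s := (Nat.even_mul.mp h).resolve_left (Nat.not_even_iff_odd.mpr hr)
    exact (Nat.Odd.sub_odd (hr.add_even hs) odd_one).mul_right _

lemma blockSwap_eq_permMatrix_finRotate_pow (r s : ℕ) :
    reindex (finSumFinEquiv.trans (finCongr (Nat.add_comm s r))) finSumFinEquiv
        (fromBlocks (0 : Matrix (Fin s) (Fin r) R) 1 1 0) =
      (finRotate (r + s) ^ r).permMatrix R := by
  ext a b
  obtain ⟨p, rfl⟩ := (finSumFinEquiv.trans (finCongr (Nat.add_comm s r))).surjective a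
  obtain ⟨q, rfl⟩ := finSumFinEquiv.surjective b
  rw [reindex_apply, submatrix_apply, symm_apply_apply, symm_apply_apply, permMatrix_apply]
  simp only [Fin.ext_iff, val_finRotate_pow_apply]
  rcases p with i | i
  · have hi : ((i : ℕ) + r) % (r + s) = r + i := by rw [Nat.mod_eq_of_lt (by omega), add_comm]
    rcases q with j | j <;> simp [one_apply, Fin.ext_iff, hi]
    omega
  · have hi : ((i : ℕ) + s + r) % (r + s) = i := by
      rw [add_assoc, add_comm s, Nat.add_mod_right, Nat.mod_eq_of_lt (by omega)]
    rcases q with j | j <;> simp [one_apply, Fin.ext_iff, hi]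
    omega

theorem blockSwap_mem_elementary_general {R : Type*} [CommRing R] (r s : ℕ)
    (h : Even (r * s)) :
    Matrix.reindex (finSumFinEquiv.trans (finCongr (Nat.add_comm s r))) finSumFinEquiv
        (Matrix.fromBlocks (0 : Matrix (Fin s) (Fin r) R) (1 : Matrix (Fin s) (Fin s) R)
          (1 : Matrix (Fin r) (Fin r) R) (0 : Matrix (Fin r) (Fin s) R)) ∈
      Esub (R := R) (r + s) := by
  rw [blockSwap_eq_permMatrix_finRotate_pow]
  exact permMatrix_mem_Esub_of_mem_alternatingGroup
    (Perm.mem_alternatingGroup.mpr (sign_finRotate_pow h))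

/-- The block permutation matrix `[[0, Id_s],[Id_r, 0]]` of rank `r+s` lies in `E_{r+s}(R)`
whenever `rs` is even. -/
theorem blockSwap_mem_elementary {R : Type*} [CommRing R] (r s : ℕ)
    (hr : 0 < r) (hs : 0 < s) (h : Even (r * s)) :
    Matrix.reindex (finSumFinEquiv.trans (finCongr (Nat.add_comm s r))) finSumFinEquiv
        (Matrix.fromBlocks (0 : Matrix (Fin s) (Fin r) R) (1 : Matrix (Fin s) (Fin s) R)
          (1 : Matrix (Fin r) (Fin r) R) (0 : Matrix (Fin r) (Fin s) R)) ∈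
      Esub (R := R) (r + s) :=
  blockSwap_mem_elementary_general r s h
end
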